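/- Let H be a separable complex Hilbert space with a Hilbert (orthonormal) basis (e_n)_{n ∈ ℕ}, and for z ∈ ℂ let c(z) be the coherent vector. Let f : ℂ → ℂ be a bounded continuous function such that for all φ, ψ ∈ H, ∫_ℂ f(z) · ⟪φ, c(z)⟫ · ⟪c(z), ψ⟫ dz = 0, the integral taken with respect to Lebesgue measure on ℂ ≅ ℝ². Then f = 0. (The operator-valued transform f ↦ ∫_ℂ f(z) |c(z)⟩⟨c(z)| dz is injective on bounded continuous functions.) -/

import Mathlib

/-!
Both inner products with the coherent vector `c(z)` are explicit: `⟪c(a), c(z)⟫` is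
`exp(-|a|²/2 - |z|²/2 + ā z)`. Testing the hypothesis on `φ = c(a)`, `ψ = c(b)` therefore gives
`∫ f(z) e^{-|z|²} e^{ā z + z̄ b} dz = 0` for all `a, b`, and the choice `a = π i w`, `b = -π i w`
turns the exponential into the Fourier character `e^{-2π i ⟪z, w⟫}`. So the Fourier transform of
the continuous integrable function `f(z) e^{-|z|²}` vanishes, and Fourier inversion gives `f = 0`.
-/

open MeasureTheory Real
open scoped ComplexInnerProductSpace

/-- The coherent vector `c(z) = exp(-|z|²/2) Σₙ (zⁿ/√(n!)) eₙ` associated with a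
Hilbert basis `(eₙ)` of a separable complex Hilbert space. -/
noncomputable def coherent {H : Type*} [NormedAddCommGroup H] [InnerProductSpace ℂ H]
    [CompleteSpace H] (e : HilbertBasis ℕ ℂ H) (z : ℂ) : H :=
  Complex.exp (-(‖z‖ : ℂ) ^ 2 / 2) • ∑' n : ℕ, (z ^ n / (Real.sqrt n.factorial : ℂ)) • e n

open Complex ComplexConjugate
open scoped FourierTransform

section Fourier

variable {V E : Type*} [NormedAddCommGroup V] [InnerProductSpace ℝ V]
  [MeasurableSpace V] [BorelSpace V] [FiniteDimensional ℝ V]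
  [NormedAddCommGroup E] [NormedSpace ℂ E] [CompleteSpace E]

theorem Continuous.eq_zero_of_fourier_eq_zero {g : V → E} (hc : Continuous g)
    (hi : Integrable g) (h : 𝓕 g = 0) : g = 0 := by
  have hinv := hc.fourierInv_fourier_eq hi (by rw [h]; exact integrable_zero _ _ _)
  rw [← hinv, h]
  ext w
  simp [Real.fourierInv_eq]

theorem integrable_cexp_neg_norm_sq : Integrable (fun v : V => cexp (-(‖v‖ : ℂ) ^ 2)) := by
  simpa using GaussianFourier.integrable_cexp_neg_mul_sq_norm_add (V := V) (b := 1)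
    (by norm_num) 0 0

end Fourier

theorem Complex.fourier_eq_integral_mul_cexp (g : ℂ → ℂ) (w : ℂ) :
    𝓕 g w = ∫ z, g z * cexp (conj (π * I * w) * z + conj z * -(π * I * w)) := by
  rw [Real.fourier_eq']
  congr 1 with z
  have hinner : (inner ℝ z w : ℂ) = (conj z * w + z * conj w) / 2 := by
    rw [Complex.inner, Complex.re_eq_add_conj]
    simp only [map_mul, conj_conj]
    ring
  rw [smul_eq_mul, mul_comm]
  congr 2
  push_cast
  rw [hinner]
  simp only [map_mul, conj_I, conj_ofReal]
  ring

section Coherent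

variable {H : Type*} [NormedAddCommGroup H] [InnerProductSpace ℂ H] [CompleteSpace H]

theorem memℓp_coherentCoeff (z : ℂ) :
    Memℓp (fun n : ℕ => z ^ n / (√n.factorial : ℂ)) 2 := by
  refine memℓp_gen ((Real.summable_pow_div_factorial (‖z‖ ^ 2)).congr fun n => ?_)
  rw [ENNReal.toReal_ofNat, Real.rpow_two, norm_div, norm_pow, Complex.norm_real,
    Real.norm_of_nonneg (Real.sqrt_nonneg _), div_pow, Real.sq_sqrt (Nat.cast_nonneg _), ← pow_mul,
    ← pow_mul, mul_comm]

/-- The coherent vector `c(z) = exp(-|z|²/2) Σₙ (zⁿ/√(n!)) eₙ` associated with a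
Hilbert basis `(eₙ)` of a separable complex Hilbert space. -/
noncomputable def coherentCoeff (z : ℂ) : lp (fun _ : ℕ => ℂ) 2 := ⟨_, memℓp_coherentCoeff z⟩

theorem inner_coherentCoeff (a z : ℂ) :
    ⟪coherentCoeff a, coherentCoeff z⟫ = cexp (conj a * z) := by
  rw [lp.inner_eq_tsum, Complex.exp_eq_exp_ℂ, NormedSpace.exp_eq_tsum_div]
  congr 1 with n
  rw [RCLike.inner_apply']
  change conj (a ^ n / (√n.factorial : ℂ)) * (z ^ n / (√n.factorial : ℂ)) = _
  rw [map_div₀, map_pow, conj_ofReal, mul_pow, div_mul_div_comm, ← ofReal_mul,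
    Real.mul_self_sqrt (Nat.cast_nonneg _), ofReal_natCast]

theorem coherent_eq_repr_symm (e : HilbertBasis ℕ ℂ H) (z : ℂ) :
    coherent e z = cexp (-(‖z‖ : ℂ) ^ 2 / 2) • e.repr.symm (coherentCoeff z) := by
  rw [coherent]
  congr 1
  exact (e.hasSum_repr_symm (coherentCoeff z)).tsum_eq

theorem inner_coherent_coherent (e : HilbertBasis ℕ ℂ H) (a z : ℂ) :
    ⟪coherent e a, coherent e z⟫ = cexp (-(‖a‖ : ℂ) ^ 2 / 2 - (‖z‖ : ℂ) ^ 2 / 2 + conj a * z) := by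
  have hconj : conj (cexp (-(‖a‖ : ℂ) ^ 2 / 2)) = cexp (-(‖a‖ : ℂ) ^ 2 / 2) := by
    rw [← exp_conj]
    simp [map_div₀, conj_ofNat]
  rw [coherent_eq_repr_symm, coherent_eq_repr_symm, inner_smul_left, inner_smul_right,
    LinearIsometryEquiv.inner_map_map, inner_coherentCoeff, hconj, ← Complex.exp_add, ← Complex.exp_add]
  congr 1
  ring

theorem integral_mul_cexp_eq_zero_of_forall_inner_coherent (e : HilbertBasis ℕ ℂ H) {f : ℂ → ℂ}
    (hker : ∀ φ ψ : H, ∫ z : ℂ, f z * ⟪φ, coherent e z⟫ * ⟪coherent e z, ψ⟫ = 0) (a b : ℂ) :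
    ∫ z : ℂ, f z * cexp (-(‖z‖ : ℂ) ^ 2) * cexp (conj a * z + conj z * b) = 0 := by
  have hmatrix : ∀ z : ℂ, f z * ⟪coherent e a, coherent e z⟫ * ⟪coherent e z, coherent e b⟫ =
      cexp (-(‖a‖ : ℂ) ^ 2 / 2 - (‖b‖ : ℂ) ^ 2 / 2) *
        (f z * cexp (-(‖z‖ : ℂ) ^ 2) * cexp (conj a * z + conj z * b)) := fun z => by
    rw [inner_coherent_coherent, inner_coherent_coherent, mul_assoc, ← Complex.exp_add, mul_assoc,
      ← Complex.exp_add, mul_left_comm, ← Complex.exp_add]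
    congr 2
    ring
  have h := hker (coherent e a) (coherent e b)
  simp_rw [hmatrix, integral_const_mul] at h
  exact (mul_eq_zero.mp h).resolve_left (exp_ne_zero _)

end Coherent

/-- The operator-valued transform `f ↦ ∫_ℂ f(z) |c(z)⟩⟨c(z)| dz` is injective on bounded
continuous functions: if all matrix elements of the transform of `f` vanish, then `f = 0`. -/
theorem stmt5 {H : Type*} [NormedAddCommGroup H] [InnerProductSpace ℂ H] [CompleteSpace H]
    (e : HilbertBasis ℕ ℂ H) (f : ℂ → ℂ)
    (hcont : Continuous f) (hbdd : ∃ C : ℝ, ∀ z, ‖f z‖ ≤ C)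
    (hker : ∀ φ ψ : H,
      ∫ z : ℂ, f z * ⟪φ, coherent e z⟫ * ⟪coherent e z, ψ⟫ = 0) :
    f = 0 := by
  obtain ⟨C, hC⟩ := hbdd
  set g : ℂ → ℂ := fun z => f z * cexp (-(‖z‖ : ℂ) ^ 2)
  have hg_cont : Continuous g := by fun_prop
  have hg_int : Integrable g :=
    integrable_cexp_neg_norm_sq.bdd_mul hcont.aestronglyMeasurable (.of_forall hC)
  have hFg : 𝓕 g = 0 := funext fun w => by
    rw [fourier_eq_integral_mul_cexp]
    exact integral_mul_cexp_eq_zero_of_forall_inner_coherent e hker _ _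
  funext z
  have hgz := congrFun (hg_cont.eq_zero_of_fourier_eq_zero hg_int hFg) z
  exact (mul_eq_zero.mp hgz).resolve_right (exp_ne_zero _)
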